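/- Let Θ and Φ be measurable spaces, p : Θ × Φ → ℝ≥0 a measurable kernel density, Q a probability measure on Φ, and Π₁, Π₂ probability measures on Θ. Define the single-step update U(Q, Π)(B) = (∫_B (∫ p(θ,φ) dΠ(θ)) dQ(φ)) / (∫_Φ (∫ p(θ,φ) dΠ(θ)) dQ(φ)), assuming all normalizing constants are positive and finite. Then U(U(Q,Π₁), Π₂) = U(U(Q,Π₂), Π₁): successive updates with observed beliefs are order-invariant. -/
import Mathlib


open MeasureTheory

/-- Single-step belief update: `U(Q, P)` has `Q`-density proportional to the
expected likelihood contribution `φ ↦ ∫ p(θ,φ) dΠ(θ)`. -/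
noncomputable def beliefUpdate {Θ Φ : Type*} [MeasurableSpace Θ] [MeasurableSpace Φ]
    (p : Θ × Φ → NNReal) (Q : Measure Φ) (P : Measure Θ) : Measure Φ :=
  (∫⁻ φ, (∫⁻ θ, (p (θ, φ) : ENNReal) ∂P) ∂Q)⁻¹ •
    Q.withDensity (fun φ => ∫⁻ θ, (p (θ, φ) : ENNReal) ∂P)

/-- Successive belief updates with observed beliefs are order-invariant. -/
theorem beliefUpdate_comm {Θ Φ : Type*} [MeasurableSpace Θ] [MeasurableSpace Φ]
    (p : Θ × Φ → NNReal) (hp : Measurable p)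
    (Q : Measure Φ) [IsProbabilityMeasure Q]
    (P1 P2 : Measure Θ) [IsProbabilityMeasure P1] [IsProbabilityMeasure P2]
    (h1pos : 0 < ∫⁻ φ, (∫⁻ θ, (p (θ, φ) : ENNReal) ∂P1) ∂Q)
    (h1fin : (∫⁻ φ, (∫⁻ θ, (p (θ, φ) : ENNReal) ∂P1) ∂Q) < ⊤)
    (h2pos : 0 < ∫⁻ φ, (∫⁻ θ, (p (θ, φ) : ENNReal) ∂P2) ∂Q)
    (h2fin : (∫⁻ φ, (∫⁻ θ, (p (θ, φ) : ENNReal) ∂P2) ∂Q) < ⊤)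
    (h12pos : 0 < ∫⁻ φ, (∫⁻ θ, (p (θ, φ) : ENNReal) ∂P2) ∂(beliefUpdate p Q P1))
    (h12fin : (∫⁻ φ, (∫⁻ θ, (p (θ, φ) : ENNReal) ∂P2) ∂(beliefUpdate p Q P1)) < ⊤)
    (h21pos : 0 < ∫⁻ φ, (∫⁻ θ, (p (θ, φ) : ENNReal) ∂P1) ∂(beliefUpdate p Q P2))
    (h21fin : (∫⁻ φ, (∫⁻ θ, (p (θ, φ) : ENNReal) ∂P1) ∂(beliefUpdate p Q P2)) < ⊤) :
    beliefUpdate p (beliefUpdate p Q P1) P2 = beliefUpdate p (beliefUpdate p Q P2) P1 := by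
  set f1 : Φ → ENNReal := fun φ => ∫⁻ θ, (p (θ, φ) : ENNReal) ∂P1 with hf1def
  set f2 : Φ → ENNReal := fun φ => ∫⁻ θ, (p (θ, φ) : ENNReal) ∂P2 with hf2def
  have m1 : Measurable f1 :=
    Measurable.lintegral_prod_left' (measurable_coe_nnreal_ennreal.comp hp)
  have m2 : Measurable f2 :=
    Measurable.lintegral_prod_left' (measurable_coe_nnreal_ennreal.comp hp)
  set a : ENNReal := ∫⁻ φ, f1 φ ∂Q with hadef
  set b : ENNReal := ∫⁻ φ, f2 φ ∂Q with hbdef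
  set I : ENNReal := ∫⁻ φ, f1 φ * f2 φ ∂Q with hIdef
  have ha0 : a ≠ 0 := h1pos.ne'
  have haT : a ≠ ⊤ := h1fin.ne
  have hb0 : b ≠ 0 := h2pos.ne'
  have hbT : b ≠ ⊤ := h2fin.ne
  -- compute the lintegral of f2 against beliefUpdate p Q P1
  have key1 : (∫⁻ φ, f2 φ ∂(beliefUpdate p Q P1)) = a⁻¹ * I := by
    rw [beliefUpdate, lintegral_smul_measure,
      lintegral_withDensity_eq_lintegral_mul _ m1 m2]
    rfl
  have key2 : (∫⁻ φ, f1 φ ∂(beliefUpdate p Q P2)) = b⁻¹ * I := by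
    rw [beliefUpdate, lintegral_smul_measure,
      lintegral_withDensity_eq_lintegral_mul _ m2 m1]
    congr 1
    simp only [hIdef]
    exact lintegral_congr fun φ => mul_comm _ _
  have hI0 : I ≠ 0 := by
    intro h
    rw [key1, h, mul_zero] at h12pos
    exact lt_irrefl _ h12pos
  have hIT : I ≠ ⊤ := by
    intro h
    rw [key1, h, ENNReal.mul_top (by simpa using haT)] at h12fin
    exact lt_irrefl _ h12fin
  -- both sides equal I⁻¹ • Q.withDensity (f1 * f2)
  have lhs : beliefUpdate p (beliefUpdate p Q P1) P2 = I⁻¹ • Q.withDensity (fun φ => f1 φ * f2 φ) := by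
    rw [beliefUpdate, key1]
    show _ • ((a⁻¹ • Q.withDensity f1).withDensity f2) = _
    rw [withDensity_smul_measure, ← withDensity_mul _ m1 m2, smul_smul,
      ENNReal.mul_inv (Or.inr hIT) (Or.inr hI0)]
    congr 1
    rw [inv_inv, mul_comm a, mul_assoc, ENNReal.mul_inv_cancel ha0 haT, mul_one]
  have rhs : beliefUpdate p (beliefUpdate p Q P2) P1 = I⁻¹ • Q.withDensity (fun φ => f1 φ * f2 φ) := by
    rw [beliefUpdate, key2]
    show _ • ((b⁻¹ • Q.withDensity f2).withDensity f1) = _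
    rw [withDensity_smul_measure, ← withDensity_mul _ m2 m1, smul_smul,
      ENNReal.mul_inv (Or.inr hIT) (Or.inr hI0)]
    have : (fun φ => f2 φ * f1 φ) = fun φ => f1 φ * f2 φ := funext fun φ => mul_comm _ _
    rw [show (f2 * f1) = fun φ => f1 φ * f2 φ from funext fun φ => mul_comm _ _]
    congr 1
    rw [inv_inv, mul_comm b, mul_assoc, ENNReal.mul_inv_cancel hb0 hbT, mul_one]
  rw [lhs, rhs]
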